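/- Let {P_θ : θ ∈ 𝕋} be a family of probability measures on a measurable space 𝕏, η : 𝕏 × 𝕋 → [0,1] with x ↦ η(x,θ) measurable for each θ, π_x(θ) = P_θ({x' : η(x',θ) ≤ η(x,θ)}), and Π̄_x(A) = sup_{θ ∈ A} π_x(θ). Fix A ⊆ 𝕋 and α ∈ [0,1], and consider the test that rejects the hypothesis 'Θ ∈ A' when Π̄_X(A) ≤ α. Then for every θ ∈ A, P_θ({x : Π̄_x(A) ≤ α}) ≤ α, i.e., the Type I error probability is bounded above by α. -/

import Mathlib

/-!
Since `θ ∈ A`, rejection forces `π_x(θ) ≤ α`, so with `μ = P_θ`, `f = η(·, θ)` and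
`F t = μ {f ≤ t}` it suffices that `μ {F ∘ f ≤ α} ≤ α`, which holds for any measure `μ`. The levels `t` with `F t ≤ α` form a down-set `S` of `ℝ`,
and `{f ∈ S}` is the increasing union of the sets `{f ≤ t}`, `t ∈ S`, each of measure at most `α`;
continuity from below along a countable cofinal family (rationals, or the maximum of `S`)
finishes the argument.
-/

open MeasureTheory Set
open scoped ENNReal

theorem measure_preimage_le_of_isLowerSet {X : Type*} [MeasurableSpace X] (μ : Measure X)
    (f : X → ℝ) {S : Set ℝ} (hS : IsLowerSet S) {α : ℝ≥0∞}
    (h : ∀ t ∈ S, μ (f ⁻¹' Iic t) ≤ α) : μ (f ⁻¹' S) ≤ α := by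
  by_cases hmax : ∃ c, IsGreatest S c
  · obtain ⟨c, hcS, hc⟩ := hmax
    exact (measure_mono (preimage_mono fun t ht => hc ht)).trans (h c hcS)
  have hcover : f ⁻¹' S ⊆ ⋃ q : {q : ℚ // (q : ℝ) ∈ S}, f ⁻¹' Iic (q : ℝ) := by
    intro x hx
    obtain ⟨s, hsS, hlt⟩ : ∃ s ∈ S, f x < s := by
      simpa [IsGreatest, upperBounds] using fun h' => hmax ⟨f x, hx, h'⟩
    obtain ⟨q, hxq, hqs⟩ := exists_rat_btwn hlt
    exact mem_iUnion.2 ⟨⟨q, hS hqs.le hsS⟩, hxq.le⟩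
  have hdir : Directed (· ⊆ ·) fun q : {q : ℚ // (q : ℝ) ∈ S} => f ⁻¹' Iic (q : ℝ) :=
    Monotone.directed_le fun q r hqr =>
      preimage_mono (Iic_subset_Iic.2 (by exact_mod_cast hqr))
  calc μ (f ⁻¹' S) ≤ μ (⋃ q : {q : ℚ // (q : ℝ) ∈ S}, f ⁻¹' Iic (q : ℝ)) := measure_mono hcover
    _ = ⨆ q : {q : ℚ // (q : ℝ) ∈ S}, μ (f ⁻¹' Iic (q : ℝ)) := hdir.measure_iUnion
    _ ≤ α := iSup_le fun q => h q q.2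

theorem measure_setOf_cdf_le_le {X : Type*} [MeasurableSpace X] (μ : Measure X) (f : X → ℝ)
    (α : ℝ≥0∞) : μ {x | μ {y | f y ≤ f x} ≤ α} ≤ α :=
  measure_preimage_le_of_isLowerSet μ f (S := {t | μ (f ⁻¹' Iic t) ≤ α})
    (fun _ _ hts ht => (measure_mono (preimage_mono (Iic_subset_Iic.2 hts))).trans ht)
    fun _ ht => ht

theorem im_test_type_one_error_general {X T : Type*} [MeasurableSpace X]
    (P : T → Measure X)
    (η : X → T → ℝ)
    (A : Set T) (α : ℝ≥0∞) :
    ∀ θ ∈ A,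
      P θ {x | (⨆ ϑ ∈ A, P ϑ {x' | η x' ϑ ≤ η x ϑ}) ≤ α} ≤ α := by
  intro θ hθ
  refine (measure_mono fun x hx => ?_).trans (measure_setOf_cdf_le_le (P θ) (η · θ) α)
  exact (le_iSup₂ (f := fun ϑ (_ : ϑ ∈ A) => P ϑ {x' | η x' ϑ ≤ η x ϑ}) θ hθ).trans hx

/-- Type I error control: for a hypothesis `A ⊆ 𝕋`, the test rejecting when
`Π̄_X(A) = sup_{ϑ∈A} π_X(ϑ) ≤ α` has Type I error probability at most `α`
under every `θ ∈ A`. -/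
theorem im_test_type_one_error {X T : Type*} [MeasurableSpace X]
    (P : T → Measure X) (hP : ∀ θ, IsProbabilityMeasure (P θ))
    (η : X → T → ℝ) (hη : ∀ x θ, η x θ ∈ Set.Icc (0 : ℝ) 1)
    (hmeas : ∀ θ, Measurable fun x => η x θ)
    (A : Set T) (α : ℝ≥0∞) (hα : α ≤ 1) :
    ∀ θ ∈ A,
      P θ {x | (⨆ ϑ ∈ A, P ϑ {x' | η x' ϑ ≤ η x ϑ}) ≤ α} ≤ α :=
  im_test_type_one_error_general P η A α
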